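/- Let m ≥ 3. The graph on vertex set Z_m × Z_8 formed by the union of Cay(Z_m × Z_8, {±1} × {2}) and m vertex-disjoint copies of the two 1-factors I_1 = {(0,1),(2,3),(4,5),(6,7)} and I_3 = {(0,4),(1,5),(2,6),(3,7)} (one copy of each placed on {j} × Z_8 for each j ∈ Z_m) can be decomposed into two C_8-factors. -/

import Mathlib

open SimpleGraph

/-- `H` is a `C_k`-factor: a 2-regular spanning graph all of whose
connected components have exactly `k` vertices (hence are `k`-cycles). -/
def IsCycleFactor {V : Type*} (H : SimpleGraph V) (k : ℕ) : Prop :=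
  (∀ v, (H.neighborSet v).ncard = 2) ∧
  (∀ v, (H.connectedComponentMk v).supp.ncard = k)

/-- `H` is a perfect matching (1-factor): every vertex has exactly one neighbour. -/
def IsOneFactor {V : Type*} (H : SimpleGraph V) : Prop :=
  ∀ v, (H.neighborSet v).ncard = 1

/-- A partition of the edge set of `G` into cycle factors with prescribed cycle lengths. -/
def CycleDecomp {V : Type*} {k : ℕ} (G : SimpleGraph V) (ℓ : Fin k → ℕ) : Prop :=
  ∃ f : Fin k → SimpleGraph V,
    (∀ i, f i ≤ G ∧ IsCycleFactor (f i) (ℓ i)) ∧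
    ∀ e ∈ G.edgeSet, ∃! i, e ∈ (f i).edgeSet

/-- A partition of the edge set of `G` into cycle factors with prescribed cycle
lengths together with one perfect matching. -/
def CycleDecompPM {V : Type*} {k : ℕ} (G : SimpleGraph V) (ℓ : Fin k → ℕ) : Prop :=
  ∃ (f : Fin k → SimpleGraph V) (M : SimpleGraph V),
    (∀ i, f i ≤ G ∧ IsCycleFactor (f i) (ℓ i)) ∧ M ≤ G ∧ IsOneFactor M ∧
    ∀ e ∈ G.edgeSet,
      ((∃! i, e ∈ (f i).edgeSet) ∧ e ∉ M.edgeSet) ∨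
      ((∀ i, e ∉ (f i).edgeSet) ∧ e ∈ M.edgeSet)

/-- The Cayley graph on `ZMod m × ZMod n` with connection set `S`
(symmetrised, loops removed). -/
def cay (m n : ℕ) (S : Set (ZMod m × ZMod n)) : SimpleGraph (ZMod m × ZMod n) :=
  SimpleGraph.fromRel (fun x y => x - y ∈ S)

/-- The 1-factors `I_1` and `I_3` of `K_8`, as a set of pairs. -/
def I13 : Set (ZMod 8 × ZMod 8) :=
  {(0, 1), (2, 3), (4, 5), (6, 7), (0, 4), (1, 5), (2, 6), (3, 7)}

/-!
Write `off b = ⌊b / 2⌋ mod 2` for `b ∈ ZMod 8`. For each column `J`, lift the 8-cycle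
`0 - 1 - 3 - 7 - 5 - 4 - 6 - 2` of `ZMod 8` to the vertices `(J + off b, b)`: its steps
`0-1, 3-7, 5-4, 6-2` are `I_1 ∪ I_3` edges inside one column and its steps `1-3, 7-5, 4-6, 2-0`
are Cayley edges between columns `J` and `J + 1`. These `m` cycles form the first factor,
isomorphic to the box product of the edgeless graph on `ZMod m` with `C_8`; the second factor
is its translate by `(0, 2)`. That the two factors partition the edges of the graph only
depends on the `ZMod 8` coordinates, so it is decided by evaluation.
-/

namespace IsCycleFactor

variable {V W : Type*} {G : SimpleGraph V} {H : SimpleGraph W} {k : ℕ}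

lemma of_iso (φ : G ≃g H) (hH : IsCycleFactor H k) : IsCycleFactor G k := by
  refine ⟨fun v => ?_, fun v => ?_⟩
  · rw [← Nat.card_coe_set_eq, Nat.card_congr (φ.mapNeighborSet v), Nat.card_coe_set_eq, hH.1]
  · rw [← Nat.card_coe_set_eq, Nat.card_congr (ConnectedComponent.isoEquivSupp φ _),
      Nat.card_coe_set_eq]
    exact hH.2 (φ v)

lemma bot_boxProd {α : Type*} (hH : IsCycleFactor H k) :
    IsCycleFactor ((⊥ : SimpleGraph α) □ H) k := by
  refine ⟨fun v => ?_, fun v => ?_⟩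
  · rw [neighborSet_boxProd, neighborSet_bot, Set.empty_prod, Set.empty_union, Set.ncard_prod,
      Set.ncard_singleton, one_mul, hH.1]
  · have hsupp : (((⊥ : SimpleGraph α) □ H).connectedComponentMk v).supp =
        {v.1} ×ˢ (H.connectedComponentMk v.2).supp := by
      ext w
      simp [ConnectedComponent.eq, reachable_boxProd, reachable_bot, eq_comm]
    rw [hsupp, Set.ncard_prod, Set.ncard_singleton, one_mul, hH.2]

end IsCycleFactor

lemma isCycleFactor_cycleGraph (n : ℕ) : IsCycleFactor (cycleGraph (n + 3)) (n + 3) := by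
  classical
  refine ⟨fun v => ?_, fun v => ?_⟩
  · rw [Set.ncard_eq_toFinset_card', ← neighborFinset_def, ← degree, cycleGraph_degree_three_le]
  · have hsupp : ((cycleGraph (n + 3)).connectedComponentMk v).supp = Set.univ :=
      Set.eq_univ_of_forall fun w =>
        ConnectedComponent.sound (cycleGraph_connected.preconnected w v)
    rw [hsupp, Set.ncard_univ, Nat.card_eq_fintype_card, Fintype.card_fin]

def octCycleIndex : ZMod 8 ≃ Fin 8 where
  toFun := ![0, 1, 7, 2, 5, 4, 6, 3]
  invFun := ![0, 1, 3, 7, 5, 4, 6, 2]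
  left_inv := by unfold Function.LeftInverse; decide
  right_inv := by unfold Function.RightInverse Function.LeftInverse; decide

def octCycle : SimpleGraph (ZMod 8) :=
  (cycleGraph 8).comap octCycleIndex

instance : DecidableRel octCycle.Adj :=
  fun _ _ => inferInstanceAs (Decidable ((cycleGraph 8).Adj _ _))

lemma isCycleFactor_octCycle : IsCycleFactor octCycle 8 :=
  (isCycleFactor_cycleGraph 5).of_iso (Iso.comap _ _)

def colOffset (b : ZMod 8) : ℕ := b.val / 2 % 2

def factorShift (i : Fin 2) : ZMod 8 := 2 * i.val

instance : DecidablePred (· ∈ I13) := fun p => by unfold I13; infer_instance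

lemma octCycle_adj_cases (i : Fin 2) (b b' : ZMod 8)
    (h : octCycle.Adj (b - factorShift i) (b' - factorShift i)) :
    (b - b' = 2 ∧ colOffset (b - factorShift i) = colOffset (b' - factorShift i) + 1) ∨
    (b' - b = 2 ∧ colOffset (b' - factorShift i) = colOffset (b - factorShift i) + 1) ∨
    (colOffset (b - factorShift i) = colOffset (b' - factorShift i) ∧
      ((b, b') ∈ I13 ∨ (b', b) ∈ I13)) := by
  revert i b b' h; decide

lemma octCycle_adj_unique (i i' : Fin 2) (b b' : ZMod 8)
    (h : octCycle.Adj (b - factorShift i) (b' - factorShift i))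
    (h' : octCycle.Adj (b - factorShift i') (b' - factorShift i')) : i = i' := by
  revert i i' b b' h h'; decide

lemma exists_octCycle_adj_add_two (b : ZMod 8) : ∃ i,
    octCycle.Adj (b + 2 - factorShift i) (b - factorShift i) ∧
      colOffset (b + 2 - factorShift i) = colOffset (b - factorShift i) + 1 := by
  revert b; decide

lemma exists_octCycle_adj_of_mem_I13 (b b' : ZMod 8) (h : (b, b') ∈ I13) : ∃ i,
    octCycle.Adj (b - factorShift i) (b' - factorShift i) ∧
      colOffset (b - factorShift i) = colOffset (b' - factorShift i) := by
  revert b b' h; decide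

section

variable {m : ℕ}

def cayI13Graph (m : ℕ) : SimpleGraph (ZMod m × ZMod 8) :=
  SimpleGraph.fromRel fun x y =>
    x - y = ((1 : ZMod m), (2 : ZMod 8)) ∨ (x.1 = y.1 ∧ (x.2, y.2) ∈ I13)

def cycleCoord (m : ℕ) (i : Fin 2) : ZMod m × ZMod 8 ≃ ZMod m × ZMod 8 where
  toFun x := (x.1 - colOffset (x.2 - factorShift i), x.2 - factorShift i)
  invFun x := (x.1 + colOffset x.2, x.2 + factorShift i)
  left_inv x := by simp
  right_inv x := by simp

def cycleFactor (m : ℕ) (i : Fin 2) : SimpleGraph (ZMod m × ZMod 8) :=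
  ((⊥ : SimpleGraph (ZMod m)) □ octCycle).comap (cycleCoord m i)

lemma isCycleFactor_cycleFactor (i : Fin 2) : IsCycleFactor (cycleFactor m i) 8 :=
  isCycleFactor_octCycle.bot_boxProd.of_iso (Iso.comap _ _)

lemma cycleFactor_adj {i : Fin 2} {x y : ZMod m × ZMod 8} :
    (cycleFactor m i).Adj x y ↔ octCycle.Adj (x.2 - factorShift i) (y.2 - factorShift i) ∧
      x.1 - colOffset (x.2 - factorShift i) = y.1 - colOffset (y.2 - factorShift i) := by
  simp [cycleFactor, cycleCoord, boxProd_adj]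

lemma cycleFactor_le (i : Fin 2) : cycleFactor m i ≤ cayI13Graph m := by
  rintro ⟨j, b⟩ ⟨j', b'⟩ h
  obtain ⟨hadj, hcol⟩ := cycleFactor_adj.1 h
  have hne : (j, b) ≠ (j', b') := fun he => hadj.ne (by cases he; rfl)
  refine ⟨hne, ?_⟩
  rcases octCycle_adj_cases i b b' hadj with ⟨hb, ho⟩ | ⟨hb, ho⟩ | ⟨ho, hI | hI⟩
  · left; left
    simp only [Prod.mk_sub_mk, Prod.mk.injEq, hb, and_true]
    rw [ho, Nat.cast_add, Nat.cast_one] at hcol; linear_combination hcol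
  · right; left
    simp only [Prod.mk_sub_mk, Prod.mk.injEq, hb, and_true]
    rw [ho, Nat.cast_add, Nat.cast_one] at hcol; linear_combination -hcol
  · left; right
    rw [ho] at hcol
    exact ⟨sub_left_injective hcol, hI⟩
  · right; right
    rw [ho] at hcol
    exact ⟨(sub_left_injective hcol).symm, hI⟩

lemma cycleFactor_adj_unique {i i' : Fin 2} {x y : ZMod m × ZMod 8}
    (h : (cycleFactor m i).Adj x y) (h' : (cycleFactor m i').Adj x y) : i = i' :=
  octCycle_adj_unique i i' x.2 y.2 (cycleFactor_adj.1 h).1 (cycleFactor_adj.1 h').1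

lemma exists_cycleFactor_adj_of_rel {x y : ZMod m × ZMod 8}
    (h : x - y = ((1 : ZMod m), (2 : ZMod 8)) ∨ (x.1 = y.1 ∧ (x.2, y.2) ∈ I13)) :
    ∃ i, (cycleFactor m i).Adj x y := by
  obtain ⟨j, b⟩ := x
  obtain ⟨j', b'⟩ := y
  rcases h with h | ⟨hj, hI⟩
  · simp only [Prod.mk_sub_mk, Prod.mk.injEq, sub_eq_iff_eq_add'] at h
    obtain ⟨rfl, rfl⟩ := h
    obtain ⟨i, hadj, ho⟩ := exists_octCycle_adj_add_two b'
    refine ⟨i, cycleFactor_adj.2 ⟨hadj, ?_⟩⟩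
    dsimp only
    rw [ho, Nat.cast_add, Nat.cast_one]; ring
  · obtain ⟨i, hadj, ho⟩ := exists_octCycle_adj_of_mem_I13 b b' hI
    exact ⟨i, cycleFactor_adj.2 ⟨hadj, by simp only at hj; rw [hj, ho]⟩⟩

lemma exists_cycleFactor_adj {x y : ZMod m × ZMod 8} (h : (cayI13Graph m).Adj x y) :
    ∃ i, (cycleFactor m i).Adj x y := by
  rcases h.2 with h | h
  · exact exists_cycleFactor_adj_of_rel h
  · obtain ⟨i, hi⟩ := exists_cycleFactor_adj_of_rel h
    exact ⟨i, hi.symm⟩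

end

theorem stmt_7 (m : ℕ) :
    CycleDecomp
      (SimpleGraph.fromRel (fun x y : ZMod m × ZMod 8 =>
        x - y = ((1 : ZMod m), (2 : ZMod 8)) ∨ (x.1 = y.1 ∧ (x.2, y.2) ∈ I13)))
      (fun _ : Fin 2 => 8) := by
  refine ⟨cycleFactor m, fun i => ⟨cycleFactor_le i, isCycleFactor_cycleFactor i⟩, ?_⟩
  intro e he
  induction e using Sym2.ind with
  | _ x y =>
    obtain ⟨i, hi⟩ := exists_cycleFactor_adj he
    exact ⟨i, hi, fun i' hi' => cycleFactor_adj_unique hi' hi⟩
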